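/- Let R ⊆ {1,…,m} be nonempty. For realized test statistics x ∈ ℝ^m, the one-sided step-down procedure selects Ŝ ⊇ R if and only if there exists a bijection σ of {1,…,m} onto itself such that, for every h ∈ {1,…,m} with σ(h) ≤ max_{r∈R} σ(r), one has x_h ≥ x̄( σ^{-1}({σ(h),…,m}) ). -/

import Mathlib

open MeasureTheory ProbabilityTheory Filter

variable {m : ℕ}

/-- `l` enumerates all indices of `Fin m`, sorted in descending order of `key`. -/
def SortedEnum (key : Fin m → ℝ) (l : List (Fin m)) : Prop :=
  l.Nodup ∧ (∀ i : Fin m, i ∈ l) ∧ l.Pairwise fun i j => key j ≤ key i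

/-- One pass of a step-down testing algorithm along a (sorted) list. -/
noncomputable def stepDownRun (xbar : Finset (Fin m) → ℝ) (key : Fin m → ℝ) :
    List (Fin m) → Finset (Fin m)
  | [] => ∅
  | h :: t =>
      if key h < xbar (insert h t.toFinset) then ∅
      else insert h (stepDownRun xbar key t)

/-- The one-sided step-down procedure run on `x` returns exactly `S`. -/
def SelectsOneSided (xbar : Finset (Fin m) → ℝ) (x : Fin m → ℝ) (S : Finset (Fin m)) : Prop :=
  ∃ l : List (Fin m), SortedEnum x l ∧ stepDownRun xbar x l = S

/-- The one-sided step-down procedure run on `x` selects a set containing `R`. -/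
def SelectsOneSidedSuperset (xbar : Finset (Fin m) → ℝ) (x : Fin m → ℝ)
    (R : Finset (Fin m)) : Prop :=
  ∃ l : List (Fin m), SortedEnum x l ∧ R ⊆ stepDownRun xbar x l

/-! Selecting `r` means that every test performed up to and including the one of `r` passes, the
test at `h` comparing `x h` with `xbar` of the set of indices not yet tested before `h`.
If the procedure selects `R`, let `σ` be the rank in the sorted order: the indices not yet tested
before `h` are then exactly `σ⁻¹({σ h, …, m})`. Conversely, given `σ`, consider a test at `h`
before some `r ∈ R`, with set `T ∋ r` of remaining indices, and let `g ∈ T` minimise `σ`. Then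
`σ g ≤ σ r`, and monotonicity of `xbar` together with the sorting give
`xbar T ≤ xbar (σ⁻¹({σ g, …, m})) ≤ x g ≤ x h`. -/

theorem List.Nodup.mem_drop_iff_le_idxOf {α : Type*} [DecidableEq α] {l : List α} (hl : l.Nodup)
    {a : α} (ha : a ∈ l) (n : ℕ) : a ∈ l.drop n ↔ n ≤ l.idxOf a := by
  rw [← not_lt, ← List.mem_take_iff_idxOf_lt ha]
  constructor
  · exact fun hd ht => List.disjoint_take_drop hl le_rfl ht hd
  · intro ht
    rw [← List.take_append_drop n l, List.mem_append] at ha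
    exact ha.resolve_left ht

theorem List.Pairwise.le_getElem_of_mem_drop {α β : Type*} [Preorder β] {f : α → β}
    {l : List α} (hl : l.Pairwise fun a b => f b ≤ f a) {i : ℕ} (hi : i < l.length) {a : α}
    (ha : a ∈ l.drop i) : f a ≤ f l[i] := by
  rw [List.drop_eq_getElem_cons hi, List.mem_cons] at ha
  rcases ha with rfl | ha
  · rfl
  · have := hl.sublist (List.drop_sublist i l)
    rw [List.drop_eq_getElem_cons hi] at this
    exact List.rel_of_pairwise_cons this ha

theorem SortedEnum.exists (key : Fin m → ℝ) : ∃ l, SortedEnum key l := by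
  let r : Fin m → Fin m → Prop := fun i j => key j ≤ key i
  have : Std.Total r := ⟨fun a b => le_total (key b) (key a)⟩
  have : IsTrans (Fin m) r := ⟨fun _ _ _ h1 h2 => le_trans h2 h1⟩
  have hperm := List.perm_insertionSort r (List.finRange m)
  exact ⟨_, hperm.nodup_iff.mpr (List.nodup_finRange m),
    fun i => hperm.mem_iff.mpr (List.mem_finRange i), List.pairwise_insertionSort _ _⟩

theorem List.Nodup.exists_perm_val_eq_idxOf {l : List (Fin m)} (hl : l.Nodup)
    (hmem : ∀ k, k ∈ l) : ∃ σ : Equiv.Perm (Fin m), ∀ k, (σ k : ℕ) = l.idxOf k := by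
  have hlen : l.length = m := by
    simpa using (List.toFinset_card_of_nodup hl).symm.trans
      (congrArg Finset.card (Finset.eq_univ_of_forall fun k => List.mem_toFinset.2 (hmem k)))
  exact ⟨(List.Nodup.getEquivOfForallMemList l hl hmem).symm.trans (finCongr hlen), fun _ => rfl⟩

theorem mem_stepDownRun_iff (xbar : Finset (Fin m) → ℝ) (key : Fin m → ℝ) {l : List (Fin m)}
    (hl : l.Nodup) (r : Fin m) :
    r ∈ stepDownRun xbar key l ↔
      r ∈ l ∧ ∀ (i : ℕ) (hi : i < l.length), r ∈ l.drop i →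
        xbar (l.drop i).toFinset ≤ key l[i] := by
  induction l with
  | nil => simp [stepDownRun]
  | cons a t ih =>
    obtain ⟨hat, ht⟩ := List.nodup_cons.mp hl
    rw [stepDownRun, ← List.toFinset_cons]
    constructor
    · intro hr
      split_ifs at hr with hfail
      · simp at hr
      rcases Finset.mem_insert.mp hr with rfl | hr
      · refine ⟨List.mem_cons_self, ?_⟩
        rintro (_ | j) hj hrj
        · exact not_lt.mp hfail
        · exact absurd (List.mem_of_mem_drop (l := t) (i := j) hrj) hat
      · obtain ⟨hrt, hpass⟩ := (ih ht).mp hr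
        refine ⟨List.mem_cons_of_mem a hrt, ?_⟩
        rintro (_ | j) hj hrj
        · exact not_lt.mp hfail
        · exact hpass j (Nat.lt_of_succ_lt_succ hj) hrj
    · rintro ⟨hr, hpass⟩
      have hpass₀ : xbar (a :: t).toFinset ≤ key a := hpass 0 (by simp) hr
      rw [if_neg (not_lt.mpr hpass₀)]
      rcases List.mem_cons.mp hr with rfl | hrt
      · exact Finset.mem_insert_self _ _
      · exact Finset.mem_insert_of_mem <| (ih ht).mpr
          ⟨hrt, fun j hj hrj => hpass (j + 1) (Nat.succ_lt_succ hj) hrj⟩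

theorem exists_perm_of_selectsOneSidedSuperset {xbar : Finset (Fin m) → ℝ} {x : Fin m → ℝ}
    {R : Finset (Fin m)} (hR : R.Nonempty) (hsel : SelectsOneSidedSuperset xbar x R) :
    ∃ σ : Equiv.Perm (Fin m), ∀ h : Fin m, σ h ≤ R.sup' hR (fun r => σ r) →
      xbar (Finset.univ.filter fun k => σ h ≤ σ k) ≤ x h := by
  obtain ⟨l, hl, hRl⟩ := hsel
  obtain ⟨σ, hσ⟩ := hl.1.exists_perm_val_eq_idxOf hl.2.1
  have hdrop (n : ℕ) (k : Fin m) : k ∈ l.drop n ↔ n ≤ σ k :=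
    hσ k ▸ hl.1.mem_drop_iff_le_idxOf (hl.2.1 k) n
  refine ⟨σ, fun h hh => ?_⟩
  obtain ⟨r, hrR, hr⟩ := Finset.exists_mem_eq_sup' hR (fun r => σ r)
  have hsuffix : (l.drop (σ h)).toFinset = Finset.univ.filter fun k => σ h ≤ σ k := by
    ext k
    simp only [List.mem_toFinset, hdrop, Finset.mem_filter, Finset.mem_univ, true_and, Fin.le_def]
  have hpass := ((mem_stepDownRun_iff xbar x hl.1 r).mp (hRl hrR)).2 (σ h)
    (hσ h ▸ List.idxOf_lt_length_of_mem (hl.2.1 h)) ((hdrop _ r).mpr (hr ▸ hh))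
  rw [hsuffix] at hpass
  simpa only [hσ, List.getElem_idxOf] using hpass

theorem selectsOneSidedSuperset_of_perm {xbar : Finset (Fin m) → ℝ}
    (hxmono : ∀ B C : Finset (Fin m), B ⊆ C → xbar B ≤ xbar C) (x : Fin m → ℝ)
    {R : Finset (Fin m)} (hR : R.Nonempty) (σ : Equiv.Perm (Fin m))
    (hσ : ∀ h : Fin m, σ h ≤ R.sup' hR (fun r => σ r) →
      xbar (Finset.univ.filter fun k => σ h ≤ σ k) ≤ x h) :
    SelectsOneSidedSuperset xbar x R := by
  obtain ⟨l, hl⟩ := SortedEnum.exists x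
  refine ⟨l, hl, fun r hrR => (mem_stepDownRun_iff xbar x hl.1 r).mpr ⟨hl.2.1 r, ?_⟩⟩
  intro i hi hri
  obtain ⟨g, hg, hmin⟩ :=
    (l.drop i).toFinset.exists_min_image (fun k => σ k) ⟨r, List.mem_toFinset.mpr hri⟩
  calc xbar (l.drop i).toFinset
      ≤ xbar (Finset.univ.filter fun k => σ g ≤ σ k) :=
        hxmono _ _ fun k hk => Finset.mem_filter.mpr ⟨Finset.mem_univ k, hmin k hk⟩
    _ ≤ x g := hσ g ((hmin r (List.mem_toFinset.mpr hri)).trans (Finset.le_sup' _ hrR))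
    _ ≤ x l[i] := hl.2.2.le_getElem_of_mem_drop hi (List.mem_toFinset.mp hg)

theorem stepdown_superset_geometry_general
    (xbar : Finset (Fin m) → ℝ)
    (hxmono : ∀ B C : Finset (Fin m), B ⊆ C → xbar B ≤ xbar C)
    (x : Fin m → ℝ) (R : Finset (Fin m)) (hR : R.Nonempty) :
    SelectsOneSidedSuperset xbar x R ↔
      ∃ σ : Equiv.Perm (Fin m),
        ∀ h : Fin m, σ h ≤ R.sup' hR (fun r => σ r) →
          xbar (Finset.univ.filter fun k => σ h ≤ σ k) ≤ x h :=
  ⟨exists_perm_of_selectsOneSidedSuperset hR,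
    fun ⟨σ, hσ⟩ => selectsOneSidedSuperset_of_perm hxmono x hR σ hσ⟩

/-- **Geometry of the event `Ŝ ⊇ R` for one-sided step-down rules.** The
one-sided step-down procedure selects `Ŝ ⊇ R` if and only if there is a
bijection `σ` of `{1,…,m}` (here a permutation of `Fin m`) such that every `h`
with rank `σ(h) ≤ max_{r ∈ R} σ(r)` satisfies `x_h ≥ x̄(σ⁻¹({σ(h),…,m}))`. -/
theorem stepdown_superset_geometry
    (hm : 0 < m)
    (xbar : Finset (Fin m) → ℝ) (hxpos : ∀ B, 0 < xbar B)
    (hxmono : ∀ B C : Finset (Fin m), B ⊆ C → xbar B ≤ xbar C)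
    (x : Fin m → ℝ) (R : Finset (Fin m)) (hR : R.Nonempty) :
    SelectsOneSidedSuperset xbar x R ↔
      ∃ σ : Equiv.Perm (Fin m),
        ∀ h : Fin m, σ h ≤ R.sup' hR (fun r => σ r) →
          xbar (Finset.univ.filter fun k => σ h ≤ σ k) ≤ x h :=
  stepdown_superset_geometry_general xbar hxmono x R hR
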